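/- Let (A; θ_0,…,θ_d; A*; θ*_0,…,θ*_d) be a Leonard system on V, with primitive idempotents E_i of A and E*_i of A*. Let u be a nonzero vector in E*_0 V, and for 0 ≤ i ≤ d set v_i = (A−θ_0 I)(A−θ_1 I)⋯(A−θ_{i−1} I)u. Then: (1) v_0, v_1, …, v_d is a basis of V; (2) A v_i = θ_i v_i + v_{i+1} for 0 ≤ i ≤ d, where v_{d+1} := 0; (3) there exist nonzero scalars φ_1, …, φ_d in K such that A* v_0 = θ*_0 v_0 and A* v_i = θ*_i v_i + φ_i v_{i−1} for 1 ≤ i ≤ d. -/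

import Mathlib

open Polynomial Finset

/-- The primitive idempotent of `A` associated with the eigenvalue `θ i`:
`E_i = ∏_{j ≠ i} (A - θ_j I) / (θ_i - θ_j)`. -/
noncomputable def primIdem {K V : Type*} [Field K] [AddCommGroup V] [Module K V]
    {d : ℕ} (A : Module.End K V) (θ : Fin (d + 1) → K) (i : Fin (d + 1)) :
    Module.End K V :=
  aeval A (∏ j ∈ Finset.univ.erase i, (C ((θ i - θ j)⁻¹) * (X - C (θ j))))

/-- A Leonard system `(A; θ_0,…,θ_d; A*; θ*_0,…,θ*_d)` on `V`. -/
def IsLeonardSystem {K V : Type*} [Field K] [AddCommGroup V] [Module K V]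
    {d : ℕ} (A Astar : Module.End K V) (θ θs : Fin (d + 1) → K) : Prop :=
  Function.Injective θ ∧ Function.Injective θs ∧
  minpoly K A = ∏ i, (X - C (θ i)) ∧
  minpoly K Astar = ∏ i, (X - C (θs i)) ∧
  (∀ i j : Fin (d + 1),
    ((1 : ℤ) < |((i : ℕ) : ℤ) - ((j : ℕ) : ℤ)| →
      primIdem A θ i * Astar * primIdem A θ j = 0) ∧
    (|((i : ℕ) : ℤ) - ((j : ℕ) : ℤ)| = 1 →
      primIdem A θ i * Astar * primIdem A θ j ≠ 0)) ∧
  (∀ i j : Fin (d + 1),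
    ((1 : ℤ) < |((i : ℕ) : ℤ) - ((j : ℕ) : ℤ)| →
      primIdem Astar θs i * A * primIdem Astar θs j = 0) ∧
    (|((i : ℕ) : ℤ) - ((j : ℕ) : ℤ)| = 1 →
      primIdem Astar θs i * A * primIdem Astar θs j ≠ 0))

section Aux
variable {K V : Type*} [Field K] [AddCommGroup V] [Module K V] {d : ℕ}
variable {B : Module.End K V} {η : Fin (d + 1) → K}

lemma primIdem_eq (B : Module.End K V) (η : Fin (d + 1) → K) (i : Fin (d + 1)) :
    primIdem B η i = aeval B (Lagrange.basis Finset.univ η i) := rfl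

lemma prod_dvd_of_roots (hη : Function.Injective η) (s : Finset (Fin (d + 1))) (q : K[X])
    (hq : ∀ k ∈ s, q.IsRoot (η k)) : (∏ k ∈ s, (X - C (η k))) ∣ q :=
  Finset.prod_dvd_of_coprime ((Polynomial.pairwise_coprime_X_sub_C hη).set_pairwise _)
    (fun k hk => (Polynomial.dvd_iff_isRoot).mpr (hq k hk))

lemma aeval_eq_zero_of_roots (hη : Function.Injective η)
    (hmin : minpoly K B = ∏ i, (X - C (η i))) (q : K[X])
    (hq : ∀ k, q.IsRoot (η k)) : aeval B q = 0 := by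
  have hdvd : minpoly K B ∣ q := hmin ▸ prod_dvd_of_roots hη univ q (fun k _ => hq k)
  obtain ⟨c, rfl⟩ := hdvd
  rw [map_mul, minpoly.aeval, zero_mul]

lemma eval_basis_self' (hη : Function.Injective η) (i : Fin (d + 1)) :
    eval (η i) (Lagrange.basis Finset.univ η i) = 1 :=
  Lagrange.eval_basis_self (hη.injOn) (mem_univ i)

lemma eval_basis_ne' {i k : Fin (d + 1)} (h : k ≠ i) :
    eval (η k) (Lagrange.basis Finset.univ η i) = 0 :=
  Lagrange.eval_basis_of_ne (Ne.symm h) (mem_univ k)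

lemma primIdem_mul_self (hη : Function.Injective η)
    (hmin : minpoly K B = ∏ i, (X - C (η i))) (i : Fin (d + 1)) :
    primIdem B η i * primIdem B η i = primIdem B η i := by
  have h0 : aeval B (Lagrange.basis Finset.univ η i * Lagrange.basis Finset.univ η i
      - Lagrange.basis Finset.univ η i) = 0 := by
    refine aeval_eq_zero_of_roots hη hmin _ (fun k => ?_)
    rcases eq_or_ne k i with rfl | h
    · simp [IsRoot, eval_basis_self' hη]
    · simp [IsRoot, eval_basis_ne' h]
  rw [map_sub, map_mul, sub_eq_zero] at h0
  rw [primIdem_eq, h0]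

lemma primIdem_mul_of_ne (hη : Function.Injective η)
    (hmin : minpoly K B = ∏ i, (X - C (η i))) {i j : Fin (d + 1)} (hij : i ≠ j) :
    primIdem B η i * primIdem B η j = 0 := by
  rw [primIdem_eq, primIdem_eq, ← map_mul]
  refine aeval_eq_zero_of_roots hη hmin _ (fun k => ?_)
  rcases eq_or_ne k i with rfl | h
  · simp [IsRoot, eval_mul, eval_basis_ne' hij]
  · simp [IsRoot, eval_mul, eval_basis_ne' h]

lemma sum_primIdem (hη : Function.Injective η) :
    ∑ i, primIdem B η i = (1 : Module.End K V) := by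
  simp only [primIdem_eq, ← map_sum]
  rw [Lagrange.sum_basis hη.injOn univ_nonempty, map_one]

lemma mul_primIdem_self (hη : Function.Injective η)
    (hmin : minpoly K B = ∏ i, (X - C (η i))) (i : Fin (d + 1)) :
    B * primIdem B η i = η i • primIdem B η i := by
  have h0 : aeval B ((X - C (η i)) * Lagrange.basis Finset.univ η i) = 0 := by
    refine aeval_eq_zero_of_roots hη hmin _ (fun k => ?_)
    rcases eq_or_ne k i with rfl | h
    · simp [IsRoot]
    · simp [IsRoot, eval_basis_ne' h]
  rw [map_mul, map_sub, aeval_X, aeval_C, sub_mul, sub_eq_zero] at h0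
  rw [primIdem_eq, h0, ← Algebra.smul_def]

lemma primIdem_ne_zero (hη : Function.Injective η)
    (hmin : minpoly K B = ∏ i, (X - C (η i))) (i : Fin (d + 1)) :
    primIdem B η i ≠ 0 := by
  intro h0
  have hb0 : Lagrange.basis Finset.univ η i ≠ 0 := by
    intro hb
    have := eval_basis_self' (η := η) hη i
    rw [hb] at this; simp at this
  have hdvd : minpoly K B ∣ Lagrange.basis Finset.univ η i :=
    minpoly.dvd _ _ (by rw [← primIdem_eq]; exact h0)
  have hle := Polynomial.natDegree_le_of_dvd hdvd hb0
  have h1 : (minpoly K B).natDegree = d + 1 := by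
    rw [hmin, Polynomial.natDegree_prod_of_monic _ _ (fun k _ => monic_X_sub_C (η k))]
    simp
  have h2 : (Lagrange.basis Finset.univ η i).natDegree = d :=
    by simpa using Lagrange.natDegree_basis hη.injOn (mem_univ i)
  omega

lemma aeval_mul_primIdem (hη : Function.Injective η)
    (hmin : minpoly K B = ∏ i, (X - C (η i))) (p : K[X]) (i : Fin (d + 1)) :
    aeval B p * primIdem B η i = eval (η i) p • primIdem B η i := by
  induction p using Polynomial.induction_on with
  | C a => rw [aeval_C, eval_C, ← Algebra.smul_def]
  | add p q hp hq => rw [map_add, add_mul, hp, hq, eval_add, add_smul]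
  | monomial n a ih =>
      have hsplit : (C a * X ^ (n + 1) : K[X]) = C a * X ^ n * X := by
        rw [pow_succ, mul_assoc]
      rw [hsplit, map_mul, aeval_X, mul_assoc, mul_primIdem_self hη hmin,
        mul_smul_comm, ih, smul_smul]
      congr 1
      simp [eval_mul, eval_pow]
      ring

lemma primIdem_mul_aeval (hη : Function.Injective η)
    (hmin : minpoly K B = ∏ i, (X - C (η i))) (p : K[X]) (i : Fin (d + 1)) :
    primIdem B η i * aeval B p = eval (η i) p • primIdem B η i := by
  rw [primIdem_eq, ← map_mul, mul_comm, map_mul, ← primIdem_eq,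
    aeval_mul_primIdem hη hmin]

lemma primIdem_apply_self (hη : Function.Injective η)
    (hmin : minpoly K B = ∏ i, (X - C (η i))) {i : Fin (d + 1)} {x : V}
    (hx : x ∈ LinearMap.range (primIdem B η i)) : primIdem B η i x = x := by
  obtain ⟨w, rfl⟩ := hx
  rw [← Module.End.mul_apply, primIdem_mul_self hη hmin]

lemma primIdem_apply_ne (hη : Function.Injective η)
    (hmin : minpoly K B = ∏ i, (X - C (η i))) {i l : Fin (d + 1)} (hli : l ≠ i) {x : V}
    (hx : x ∈ LinearMap.range (primIdem B η i)) : primIdem B η l x = 0 := by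
  obtain ⟨w, rfl⟩ := hx
  rw [← Module.End.mul_apply, primIdem_mul_of_ne hη hmin hli, LinearMap.zero_apply]

lemma exists_smul_of_mem_range [FiniteDimensional K V]
    (hdim : Module.finrank K V = d + 1) (hη : Function.Injective η)
    (hmin : minpoly K B = ∏ i, (X - C (η i))) (i : Fin (d + 1))
    {x y : V} (hx : x ∈ LinearMap.range (primIdem B η i)) (hx0 : x ≠ 0)
    (hy : y ∈ LinearMap.range (primIdem B η i)) : ∃ c : K, y = c • x := by
  by_contra hc
  push_neg at hc
  have hz : ∀ m : Fin (d + 1), ∃ z, primIdem B η m z ≠ 0 := by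
    intro m
    by_contra h
    push_neg at h
    exact primIdem_ne_zero hη hmin m (LinearMap.ext fun w => h w)
  choose z hz using hz
  set f : Option (Fin (d + 1)) → V :=
    fun o => o.elim y (fun m => if m = i then x else primIdem B η m (z m)) with hf
  have hli : LinearIndependent K f := by
    rw [Fintype.linearIndependent_iff]
    intro g hg
    rw [Fintype.sum_option] at hg
    have gsome : ∀ l : Fin (d + 1), l ≠ i → g (some l) = 0 := by
      intro l hl
      have h1 := congrArg (primIdem B η l) hg
      simp only [map_add, map_smul, map_sum, map_zero, show f none = y from rfl] at h1
      rw [primIdem_apply_ne hη hmin hl hy, smul_zero, zero_add] at h1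
      rw [Finset.sum_eq_single l (fun m _ hml => ?_) (by simp)] at h1
      · have hfl : f (some l) = primIdem B η l (z l) := by simp [hf, if_neg hl]
        rw [hfl, ← Module.End.mul_apply, primIdem_mul_self hη hmin] at h1
        exact (smul_eq_zero.mp h1).resolve_right (hz l)
      · rcases eq_or_ne m i with rfl | hmi
        · rw [show f (some m) = x by simp [hf], primIdem_apply_ne hη hmin hl hx, smul_zero]
        · have hr : f (some m) ∈ LinearMap.range (primIdem B η m) := by
            simp only [hf, Option.elim, if_neg hmi]; exact ⟨z m, rfl⟩
          rw [primIdem_apply_ne hη hmin (Ne.symm hml) hr, smul_zero]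
    have h2 := congrArg (primIdem B η i) hg
    simp only [map_add, map_smul, map_sum, map_zero, show f none = y from rfl] at h2
    rw [primIdem_apply_self hη hmin hy] at h2
    rw [Finset.sum_eq_single i (fun m _ hmi => by rw [gsome m hmi, zero_smul]) (by simp)] at h2
    rw [show f (some i) = x by simp [hf], primIdem_apply_self hη hmin hx] at h2
    have hgnone : g none = 0 := by
      by_contra hgn
      apply hc (-((g none)⁻¹ * g (some i)))
      have h3 : g none • y = -(g (some i) • x) := eq_neg_of_add_eq_zero_left h2
      have h4 : y = (g none)⁻¹ • (g none • y) := by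
        rw [smul_smul, inv_mul_cancel₀ hgn, one_smul]
      rw [h4, h3, smul_neg, smul_smul, ← neg_smul]
    rw [hgnone, zero_smul, zero_add] at h2
    have hgsi : g (some i) = 0 := (smul_eq_zero.mp h2).resolve_right hx0
    intro o
    match o with
    | none => exact hgnone
    | some m => rcases eq_or_ne m i with rfl | hmi
                · exact hgsi
                · exact gsome m hmi
  have hcard := hli.fintype_card_le_finrank
  rw [hdim] at hcard
  simp at hcard

lemma primIdem_step [FiniteDimensional K V]
    (hdim : Module.finrank K V = d + 1) (hη : Function.Injective η)
    (hmin : minpoly K B = ∏ i, (X - C (η i))) (B' : Module.End K V) {i j : Fin (d + 1)}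
    (hne : primIdem B η j * B' * primIdem B η i ≠ 0)
    {x : V} (hx : x ∈ LinearMap.range (primIdem B η i)) (hx0 : x ≠ 0) :
    primIdem B η j (B' x) ≠ 0 := by
  obtain ⟨w, hw⟩ : ∃ w, (primIdem B η j * B' * primIdem B η i) w ≠ 0 := by
    by_contra h
    push_neg at h
    exact hne (LinearMap.ext fun w => h w)
  obtain ⟨c, hc⟩ := exists_smul_of_mem_range hdim hη hmin i hx hx0 ⟨w, rfl⟩
  intro h0
  apply hw
  rw [Module.End.mul_apply, Module.End.mul_apply, hc, map_smul, map_smul, h0, smul_zero]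

end Aux

lemma int_abs_gt (a b : ℕ) (h : b + 1 < a ∨ a + 1 < b) :
    (1 : ℤ) < |(a : ℤ) - (b : ℤ)| := by
  rcases abs_cases ((a : ℤ) - (b : ℤ)) with ⟨h1, h2⟩ | ⟨h1, h2⟩ <;> rw [h1] <;> omega

lemma int_abs_one (a b : ℕ) (h : b + 1 = a ∨ a + 1 = b) :
    |(a : ℤ) - (b : ℤ)| = 1 := by
  rcases abs_cases ((a : ℤ) - (b : ℤ)) with ⟨h1, h2⟩ | ⟨h1, h2⟩ <;> rw [h1] <;> omega

/-- Properties of the split basis `v_i = (A−θ_0 I)⋯(A−θ_{i−1} I) u` where `u` is a nonzero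
vector in `E*_0 V`: it is a basis of `V`, `A v_i = θ_i v_i + v_{i+1}` (with `v_{d+1} = 0`),
and there exist nonzero scalars `φ_1, …, φ_d` with `A* v_0 = θ*_0 v_0` and
`A* v_i = θ*_i v_i + φ_i v_{i−1}` for `1 ≤ i ≤ d`. -/
theorem stmt_7 {K V : Type*} [Field K] [AddCommGroup V] [Module K V] [FiniteDimensional K V]
    {d : ℕ} (hdim : Module.finrank K V = d + 1)
    (A Astar : Module.End K V) (θ θs : Fin (d + 1) → K)
    (hLS : IsLeonardSystem A Astar θ θs)
    (u : V) (hu : u ∈ LinearMap.range (primIdem Astar θs 0)) (hu0 : u ≠ 0)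
    (v : Fin (d + 1) → V)
    (hv : ∀ i : Fin (d + 1),
      v i = (aeval A (∏ k ∈ Finset.univ.filter (fun k => k < i), (X - C (θ k)))) u) :
    (LinearIndependent K v ∧ Submodule.span K (Set.range v) = ⊤) ∧
    ((∀ i j : Fin (d + 1), (i : ℕ) + 1 = (j : ℕ) →
        A (v i) = θ i • v i + v j) ∧
      A (v (Fin.last d)) = θ (Fin.last d) • v (Fin.last d)) ∧
    (∃ φ : Fin (d + 1) → K,
      Astar (v 0) = θs 0 • v 0 ∧
      ∀ i j : Fin (d + 1), (j : ℕ) + 1 = (i : ℕ) →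
        φ i ≠ 0 ∧ Astar (v i) = θs i • v i + φ i • v j) := by
  obtain ⟨hθ, hθs, hminA, hminAs, htriE, htriEs⟩ := hLS
  obtain ⟨τ, hτdef⟩ : ∃ τ : Fin (d + 1) → K[X], ∀ i : Fin (d + 1),
      τ i = ∏ k ∈ Finset.univ.filter (fun k => k < i), (X - C (θ k)) :=
    ⟨_, fun _ => rfl⟩
  have hvτ : ∀ i : Fin (d + 1), v i = aeval A (τ i) u := by
    intro i; rw [hv i, hτdef i]
  -- basic facts about u
  have h1 : primIdem Astar θs 0 u = u := primIdem_apply_self hθs hminAs hu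
  -- G j (A^k u) = 0 for k < j
  have hAk : ∀ (k : ℕ) (j : Fin (d + 1)), k < (j : ℕ) →
      primIdem Astar θs j ((A ^ k) u) = 0 := by
    intro k
    induction k with
    | zero =>
      intro j hj
      have hj0 : j ≠ 0 := by
        intro h; rw [h] at hj; simp at hj
      simp only [pow_zero, Module.End.one_apply]
      rw [← h1, ← Module.End.mul_apply, primIdem_mul_of_ne hθs hminAs hj0,
        LinearMap.zero_apply]
    | succ k ih =>
      intro j hj
      have hdecomp : (A ^ (k + 1)) u = A ((A ^ k) u) := by
        rw [pow_succ', Module.End.mul_apply]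
      have hsum : (A ^ k) u = ∑ l, primIdem Astar θs l ((A ^ k) u) := by
        rw [← LinearMap.sum_apply, sum_primIdem hθs, Module.End.one_apply]
      rw [hdecomp]
      have hexp : primIdem Astar θs j (A ((A ^ k) u)) =
          ∑ l, primIdem Astar θs j (A (primIdem Astar θs l ((A ^ k) u))) := by
        conv_lhs => rw [hsum]
        rw [map_sum, map_sum]
      rw [hexp]
      apply Finset.sum_eq_zero
      intro l _
      rcases lt_or_ge ((l : ℕ) + 1) (j : ℕ) with hgap | hnear
      · have hz := (htriEs j l).1 (int_abs_gt _ _ (Or.inl hgap))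
        have : primIdem Astar θs j (A (primIdem Astar θs l ((A ^ k) u))) =
            (primIdem Astar θs j * A * primIdem Astar θs l) ((A ^ k) u) := rfl
        rw [this, hz, LinearMap.zero_apply]
      · have hlk : k < (l : ℕ) := by omega
        rw [ih l hlk, map_zero, map_zero]
  -- G j (A^j u) ≠ 0
  have hAjj : ∀ j : Fin (d + 1), primIdem Astar θs j ((A ^ (j : ℕ)) u) ≠ 0 := by
    intro j
    induction j using Fin.induction with
    | zero => simpa [h1] using hu0
    | succ j ih =>
      have hx0 : primIdem Astar θs j.castSucc ((A ^ ((j.castSucc : ℕ))) u) ≠ 0 := ih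
      have hxr : primIdem Astar θs j.castSucc ((A ^ ((j.castSucc : ℕ))) u) ∈
          LinearMap.range (primIdem Astar θs j.castSucc) := ⟨_, rfl⟩
      have hdecomp : (A ^ ((j.succ : ℕ))) u = A ((A ^ ((j.castSucc : ℕ))) u) := by
        rw [Fin.val_succ, Fin.coe_castSucc, pow_succ', Module.End.mul_apply]
      have hsum : (A ^ ((j.castSucc : ℕ))) u =
          ∑ l, primIdem Astar θs l ((A ^ ((j.castSucc : ℕ))) u) := by
        rw [← LinearMap.sum_apply, sum_primIdem hθs, Module.End.one_apply]
      have hexp : primIdem Astar θs j.succ ((A ^ ((j.succ : ℕ))) u) =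
          ∑ l, primIdem Astar θs j.succ
            (A (primIdem Astar θs l ((A ^ ((j.castSucc : ℕ))) u))) := by
        rw [hdecomp]
        conv_lhs => rw [hsum]
        rw [map_sum, map_sum]
      rw [hexp, Finset.sum_eq_single j.castSucc (fun l _ hl => ?_) (by simp)]
      · exact primIdem_step hdim hθs hminAs A
          ((htriEs j.succ j.castSucc).2 (by
            apply int_abs_one; left; rw [Fin.val_succ, Fin.coe_castSucc])) hxr hx0
      · rcases lt_or_ge ((l : ℕ) + 1) ((j.succ : ℕ)) with hgap | hnear
        · have hz := (htriEs j.succ l).1 (int_abs_gt _ _ (Or.inl hgap))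
          have : primIdem Astar θs j.succ
              (A (primIdem Astar θs l ((A ^ ((j.castSucc : ℕ))) u))) =
              (primIdem Astar θs j.succ * A * primIdem Astar θs l)
                ((A ^ ((j.castSucc : ℕ))) u) := rfl
          rw [this, hz, LinearMap.zero_apply]
        · have hlgt : ((j.castSucc : ℕ)) < (l : ℕ) := by
            have h1 : (l : ℕ) ≠ (j.castSucc : ℕ) := fun h => hl (Fin.ext h)
            rw [Fin.val_succ] at hnear
            rw [Fin.coe_castSucc] at h1 ⊢
            omega
          rw [hAk _ l hlgt, map_zero, map_zero]
  -- degrees of τ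
  have hmonic : ∀ i : Fin (d + 1), (τ i).Monic := by
    intro i
    rw [hτdef i]
    exact monic_prod_of_monic _ _ (fun k _ => monic_X_sub_C (θ k))
  have hcardf : ∀ i : Fin (d + 1),
      (Finset.univ.filter (fun k => k < i)).card = (i : ℕ) := by
    intro i
    have : Finset.univ.filter (fun k => k < i) = Finset.Iio i := by
      ext k; simp
    rw [this, Fin.card_Iio]
  have hτdeg : ∀ i : Fin (d + 1), (τ i).natDegree = (i : ℕ) := by
    intro i
    rw [hτdef i,
      Polynomial.natDegree_prod_of_monic _ _ (fun k _ => monic_X_sub_C (θ k))]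
    simp [hcardf i]
  have hdegτ : ∀ i : Fin (d + 1), (τ i).degree = ((i : ℕ) : WithBot ℕ) := by
    intro i
    rw [Polynomial.degree_eq_natDegree (hmonic i).ne_zero, hτdeg i]
  -- vanishing of G j on low-degree images
  have haux : ∀ (p : K[X]) (j : Fin (d + 1)), p.degree < ((j : ℕ) : WithBot ℕ) →
      primIdem Astar θs j (aeval A p u) = 0 := by
    intro p j hdeg
    rcases eq_or_ne p 0 with rfl | hp0
    · simp
    have hnd : p.natDegree < (j : ℕ) := (natDegree_lt_iff_degree_lt hp0).mpr hdeg
    rw [aeval_eq_sum_range, LinearMap.sum_apply, map_sum]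
    apply Finset.sum_eq_zero
    intro k hk
    rw [Finset.mem_range] at hk
    rw [LinearMap.smul_apply, map_smul, hAk k j (by omega), smul_zero]
  have hGv0 : ∀ i j : Fin (d + 1), i < j → primIdem Astar θs j (v i) = 0 := by
    intro i j hij
    rw [hvτ i]
    exact haux (τ i) j (by rw [hdegτ i]; exact_mod_cast hij)
  have hGvv : ∀ i : Fin (d + 1), primIdem Astar θs i (v i) ≠ 0 := by
    intro i
    have hrdeg : (τ i - X ^ (i : ℕ)).degree < ((i : ℕ) : WithBot ℕ) := by
      have := Polynomial.degree_sub_lt (p := τ i) (q := X ^ (i : ℕ))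
        (by rw [hdegτ i, degree_X_pow]) (hmonic i).ne_zero
        (by rw [(hmonic i).leadingCoeff, leadingCoeff_X_pow])
      rwa [hdegτ i] at this
    have hsplit : v i = (A ^ (i : ℕ)) u + aeval A (τ i - X ^ (i : ℕ)) u := by
      rw [hvτ i]
      have hτi : τ i = X ^ (i : ℕ) + (τ i - X ^ (i : ℕ)) := by ring
      conv_lhs => rw [hτi]
      rw [map_add, LinearMap.add_apply, map_pow, aeval_X]
    rw [hsplit, map_add, haux _ i hrdeg, add_zero]
    exact hAjj i
  -- triangularity: coefficient extraction
  have hT : ∀ (t : ℕ) (x : V), (∀ m : Fin (d + 1), t ≤ (m : ℕ) →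
        primIdem Astar θs m x = 0) →
      ∀ c : Fin (d + 1) → K, (∑ l, c l • v l = x) →
      ∀ l : Fin (d + 1), t ≤ (l : ℕ) → c l = 0 := by
    intro t x hx c hc
    suffices H : ∀ n, ∀ l : Fin (d + 1), d ≤ (l : ℕ) + n → t ≤ (l : ℕ) → c l = 0 by
      intro l hl
      exact H (d - (l : ℕ)) l (by omega) hl
    intro n
    induction n using Nat.strong_induction_on with
    | _ n IH =>
      intro l hld htl
      have hcomp := congrArg (primIdem Astar θs l) hc
      rw [map_sum, hx l htl] at hcomp
      rw [Finset.sum_eq_single l (fun m _ hml => ?_) (by simp)] at hcomp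
      · simp only [map_smul] at hcomp
        exact (smul_eq_zero.mp hcomp).resolve_right (hGvv l)
      · rcases lt_or_gt_of_ne hml with h | h
        · rw [map_smul, hGv0 m l h, smul_zero]
        · have hm0 : c m = 0 := by
            have hml' : (l : ℕ) < (m : ℕ) := h
            have hmd : (m : ℕ) ≤ d := by omega
            exact IH (d - (m : ℕ)) (by omega) m (by omega) (by omega)
          rw [hm0, zero_smul, map_zero]
  have hLI : LinearIndependent K v := by
    rw [Fintype.linearIndependent_iff]
    intro g hg i
    exact hT 0 0 (fun m _ => map_zero _) g hg i (Nat.zero_le _)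
  have hspan : Submodule.span K (Set.range v) = ⊤ :=
    hLI.span_eq_top_of_card_eq_finrank (by rw [Fintype.card_fin, hdim])
  -- part 2
  have hsucc : ∀ i j : Fin (d + 1), (i : ℕ) + 1 = (j : ℕ) →
      v j = A (v i) - θ i • v i := by
    intro i j hij
    have hfil : Finset.univ.filter (fun k => k < j) =
        insert i (Finset.univ.filter (fun k => k < i)) := by
      ext k
      simp only [Finset.mem_filter, Finset.mem_univ, true_and, Finset.mem_insert,
        Fin.lt_def, Fin.ext_iff]
      omega
    have hτj : τ j = (X - C (θ i)) * τ i := by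
      rw [hτdef j, hfil, Finset.prod_insert (by simp), ← hτdef i]
    rw [hvτ j, hτj, map_mul, map_sub, aeval_X, aeval_C, Module.End.mul_apply,
      LinearMap.sub_apply, Module.algebraMap_end_apply, ← hvτ i]
  have hpart2a : ∀ i j : Fin (d + 1), (i : ℕ) + 1 = (j : ℕ) →
      A (v i) = θ i • v i + v j := by
    intro i j hij
    rw [hsucc i j hij]
    abel
  have hpart2b : A (v (Fin.last d)) = θ (Fin.last d) • v (Fin.last d) := by
    have hfil : (Finset.univ : Finset (Fin (d + 1))) =
        insert (Fin.last d) (Finset.univ.filter (fun k => k < Fin.last d)) := by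
      ext k
      have := k.isLt
      simp only [Finset.mem_univ, Finset.mem_insert, Finset.mem_filter, true_and,
        Fin.lt_def, Fin.ext_iff, Fin.val_last, true_iff]
      omega
    have hprod : (X - C (θ (Fin.last d))) * τ (Fin.last d) =
        ∏ k, (X - C (θ k)) := by
      rw [hτdef (Fin.last d)]
      conv_rhs => rw [hfil]
      rw [Finset.prod_insert (by simp)]
    have h0 : aeval A ((X - C (θ (Fin.last d))) * τ (Fin.last d)) = 0 := by
      rw [hprod, ← hminA]
      exact minpoly.aeval K A
    have h0' := congrArg (fun (f : Module.End K V) => f u) h0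
    simp only [map_mul, map_sub, aeval_X, aeval_C, Module.End.mul_apply,
      LinearMap.sub_apply, Module.algebraMap_end_apply, LinearMap.zero_apply] at h0'
    rw [← hvτ (Fin.last d)] at h0'
    exact sub_eq_zero.mp h0'
  -- part 3
  have hv0u : v 0 = u := by
    have hfil0 : Finset.univ.filter (fun k => k < (0 : Fin (d + 1))) = ∅ := by
      ext k; simp
    rw [hv 0, hfil0, Finset.prod_empty, map_one, Module.End.one_apply]
  have hAsu : Astar (v 0) = θs 0 • v 0 := by
    rw [hv0u]
    calc Astar u = (Astar * primIdem Astar θs 0) u := by rw [Module.End.mul_apply, h1]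
      _ = (θs 0 • primIdem Astar θs 0) u := by rw [mul_primIdem_self hθs hminAs]
      _ = θs 0 • u := by rw [LinearMap.smul_apply, h1]
  have hFv : ∀ (p : K[X]) (k : Fin (d + 1)),
      primIdem A θ k (aeval A p u) = eval (θ k) p • primIdem A θ k u := by
    intro p k
    calc primIdem A θ k (aeval A p u) = (primIdem A θ k * aeval A p) u := rfl
      _ = (eval (θ k) p • primIdem A θ k) u := by rw [primIdem_mul_aeval hθ hminA]
      _ = eval (θ k) p • primIdem A θ k u := rfl
  have hFu : ∀ k : Fin (d + 1), primIdem A θ k u ≠ 0 := by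
    intro k hk0
    apply primIdem_ne_zero hθ hminA k
    apply LinearMap.ext_on hspan
    rintro x ⟨i, rfl⟩
    rw [hvτ i, hFv (τ i) k, hk0, smul_zero, LinearMap.zero_apply]
  have hτvanish : ∀ (i m : Fin (d + 1)), (m : ℕ) < (i : ℕ) → eval (θ m) (τ i) = 0 := by
    intro i m hm
    rw [hτdef i, eval_prod]
    refine Finset.prod_eq_zero (i := m) ?_ ?_
    · rw [Finset.mem_filter]
      exact ⟨Finset.mem_univ m, Fin.lt_def.mpr hm⟩
    · simp
  have hτself : ∀ i : Fin (d + 1), eval (θ i) (τ i) ≠ 0 := by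
    intro i
    rw [hτdef i, eval_prod]
    refine Finset.prod_ne_zero_iff.mpr (fun k hk => ?_)
    simp only [eval_sub, eval_X, eval_C]
    refine sub_ne_zero.mpr (fun h => ?_)
    have hik := hθ h
    subst hik
    rw [Finset.mem_filter] at hk
    exact absurd hk.2 (lt_irrefl i)
  have hFvi0 : ∀ (i m : Fin (d + 1)), (m : ℕ) < (i : ℕ) →
      primIdem A θ m (v i) = 0 := by
    intro i m hm
    rw [hvτ i, hFv, hτvanish i m hm, zero_smul]
  have hAscomm : ∀ m : Fin (d + 1),
      primIdem Astar θs m * Astar = Astar * primIdem Astar θs m := by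
    intro m
    have hc : aeval Astar (Lagrange.basis Finset.univ θs m * X)
        = aeval Astar (X * Lagrange.basis Finset.univ θs m) := by rw [mul_comm]
    rw [map_mul, map_mul, aeval_X] at hc
    rw [primIdem_eq]
    exact hc
  have hstep : ∀ i j : Fin (d + 1), (j : ℕ) + 1 = (i : ℕ) →
      ∃ φ0 : K, φ0 ≠ 0 ∧ ∀ j₂ : Fin (d + 1), (j₂ : ℕ) + 1 = (i : ℕ) →
        Astar (v i) = θs i • v i + φ0 • v j₂ := by
    intro i j hij
    let b : Module.Basis (Fin (d + 1)) K V := Module.Basis.mk hLI hspan.ge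
    set c : Fin (d + 1) → K := fun l => b.repr (Astar (v i)) l with hcdef
    have hrepr : ∑ l, c l • v l = Astar (v i) := by
      have hsum := b.sum_repr (Astar (v i))
      simpa [hcdef, b, Module.Basis.mk_apply] using hsum
    have hctop : ∀ l : Fin (d + 1), (i : ℕ) < (l : ℕ) → c l = 0 := by
      intro l hl
      refine hT ((i : ℕ) + 1) (Astar (v i)) (fun m hm => ?_) c hrepr l (by omega)
      calc primIdem Astar θs m (Astar (v i))
          = (Astar * primIdem Astar θs m) (v i) := by rw [← hAscomm m]; rfl
        _ = Astar (primIdem Astar θs m (v i)) := rfl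
        _ = 0 := by rw [hGv0 i m (Fin.lt_def.mpr (by omega)), map_zero]
    have hci : c i = θs i := by
      have e1 : primIdem Astar θs i (Astar (v i))
          = θs i • primIdem Astar θs i (v i) := by
        calc primIdem Astar θs i (Astar (v i))
            = (Astar * primIdem Astar θs i) (v i) := by rw [← hAscomm i]; rfl
          _ = θs i • primIdem Astar θs i (v i) := by
              rw [mul_primIdem_self hθs hminAs, LinearMap.smul_apply]
      have e2 : primIdem Astar θs i (Astar (v i))
          = c i • primIdem Astar θs i (v i) := by
        conv_lhs => rw [← hrepr]
        rw [map_sum, Finset.sum_eq_single i (fun m _ hmi => ?_) (by simp)]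
        · rw [map_smul]
        · rcases lt_or_gt_of_ne hmi with h | h
          · rw [map_smul, hGv0 m i h, smul_zero]
          · rw [hctop m (Fin.lt_def.mp h), zero_smul, map_zero]
      have h3 : (c i - θs i) • primIdem Astar θs i (v i) = 0 := by
        rw [sub_smul, e2.symm.trans e1, sub_self]
      exact sub_eq_zero.mp ((smul_eq_zero.mp h3).resolve_right (hGvv i))
    set P : K[X] := ∑ l ∈ Finset.univ.filter (fun l => l < i), C (c l) * τ l with hPdef
    have hwP : Astar (v i) - θs i • v i = aeval A P u := by
      have hsplit : Astar (v i) = c i • v i + ∑ l ∈ Finset.univ.erase i, c l • v l := by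
        rw [← hrepr, ← Finset.add_sum_erase _ _ (Finset.mem_univ i)]
      have hsub : Finset.univ.filter (fun l => l < i) ⊆ Finset.univ.erase i := by
        intro l hl
        rw [Finset.mem_filter] at hl
        exact Finset.mem_erase.mpr ⟨ne_of_lt hl.2, Finset.mem_univ l⟩
      have hzero : ∀ l ∈ Finset.univ.erase i,
          l ∉ Finset.univ.filter (fun l => l < i) → c l • v l = 0 := by
        intro l hl hnl
        have h1' : l ≠ i := (Finset.mem_erase.mp hl).1
        have h2' : ¬ l < i := fun h =>
          hnl (Finset.mem_filter.mpr ⟨Finset.mem_univ l, h⟩)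
        have h3' : (i : ℕ) < (l : ℕ) := by
          rcases lt_trichotomy l i with h | h | h
          · exact absurd h h2'
          · exact absurd h h1'
          · exact Fin.lt_def.mp h
        rw [hctop l h3', zero_smul]
      rw [hsplit, hci, add_sub_cancel_left]
      calc ∑ l ∈ Finset.univ.erase i, c l • v l
          = ∑ l ∈ Finset.univ.filter (fun l => l < i), c l • v l :=
            (Finset.sum_subset hsub hzero).symm
        _ = ∑ l ∈ Finset.univ.filter (fun l => l < i), aeval A (C (c l) * τ l) u := by
            refine Finset.sum_congr rfl (fun l hl => ?_)
            rw [map_mul, aeval_C, Module.End.mul_apply, Module.algebraMap_end_apply,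
              ← hvτ l]
        _ = aeval A P u := by
            rw [hPdef, map_sum, LinearMap.sum_apply]
    have hroots : ∀ k : Fin (d + 1), (k : ℕ) < (j : ℕ) → P.IsRoot (θ k) := by
      intro k hk
      have hki : (k : ℕ) < (i : ℕ) := by omega
      have hFAs : primIdem A θ k (Astar (v i)) = 0 := by
        have hsumF : v i = ∑ m, primIdem A θ m (v i) := by
          rw [← LinearMap.sum_apply, sum_primIdem hθ, Module.End.one_apply]
        have hexp : primIdem A θ k (Astar (v i)) =
            ∑ m, primIdem A θ k (Astar (primIdem A θ m (v i))) := by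
          conv_lhs => rw [hsumF]
          rw [map_sum, map_sum]
        rw [hexp]
        refine Finset.sum_eq_zero (fun m _ => ?_)
        rcases lt_or_ge ((m : ℕ)) ((i : ℕ)) with hm | hm
        · rw [hFvi0 i m hm, map_zero, map_zero]
        · have hz := (htriE k m).1 (int_abs_gt _ _ (Or.inr (by omega)))
          have hrw : primIdem A θ k (Astar (primIdem A θ m (v i))) =
              (primIdem A θ k * Astar * primIdem A θ m) (v i) := rfl
          rw [hrw, hz, LinearMap.zero_apply]
      have hFw : eval (θ k) P • primIdem A θ k u = 0 := by
        rw [← hFv P k, ← hwP, map_sub, hFAs, map_smul, hFvi0 i k hki, smul_zero,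
          sub_zero]
      exact (smul_eq_zero.mp hFw).resolve_right (hFu k)
    have hdvd : τ j ∣ P := by
      rw [hτdef j]
      refine prod_dvd_of_roots hθ _ P (fun k hk => ?_)
      rw [Finset.mem_filter] at hk
      exact hroots k (Fin.lt_def.mp hk.2)
    have hPdeg : P.degree ≤ ((j : ℕ) : WithBot ℕ) := by
      rw [hPdef]
      refine (Polynomial.degree_sum_le _ _).trans (Finset.sup_le (fun l hl => ?_))
      rw [Finset.mem_filter] at hl
      have hlj : (l : ℕ) ≤ (j : ℕ) := by
        have := Fin.lt_def.mp hl.2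
        omega
      calc (C (c l) * τ l).degree ≤ (C (c l)).degree + (τ l).degree :=
            Polynomial.degree_mul_le _ _
        _ ≤ 0 + ((l : ℕ) : WithBot ℕ) := add_le_add degree_C_le (le_of_eq (hdegτ l))
        _ = ((l : ℕ) : WithBot ℕ) := zero_add _
        _ ≤ ((j : ℕ) : WithBot ℕ) := by exact_mod_cast hlj
    obtain ⟨q, hq⟩ := hdvd
    have hφex : ∃ φ0 : K, P = C φ0 * τ j := by
      rcases eq_or_ne q 0 with rfl | hq0
      · exact ⟨0, by rw [hq, mul_zero, map_zero, zero_mul]⟩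
      · have h2 : ((j : ℕ) : WithBot ℕ) + q.degree ≤ ((j : ℕ) : WithBot ℕ) := by
          have := hPdeg
          rwa [hq, Polynomial.degree_mul, hdegτ j] at this
        have h3 : (j : ℕ) + q.natDegree ≤ (j : ℕ) := by
          rw [Polynomial.degree_eq_natDegree hq0] at h2
          exact_mod_cast h2
        have h4 : q.natDegree = 0 := by omega
        obtain ⟨a, ha⟩ := Polynomial.natDegree_eq_zero.mp h4
        exact ⟨a, by rw [hq, ← ha, mul_comm]⟩
    obtain ⟨φ0, hPφ⟩ := hφex
    have hw' : Astar (v i) - θs i • v i = φ0 • v j := by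
      rw [hwP, hPφ, map_mul, aeval_C, Module.End.mul_apply,
        Module.algebraMap_end_apply, ← hvτ j]
    have hFvi : primIdem A θ i (v i) ≠ 0 := by
      rw [hvτ i, hFv]
      exact smul_ne_zero (hτself i) (hFu i)
    have hFjw : primIdem A θ j (Astar (v i) - θs i • v i) ≠ 0 := by
      rw [map_sub, map_smul, hFvi0 i j (by omega), smul_zero, sub_zero]
      have hsumF : v i = ∑ m, primIdem A θ m (v i) := by
        rw [← LinearMap.sum_apply, sum_primIdem hθ, Module.End.one_apply]
      have hexp : primIdem A θ j (Astar (v i)) =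
          ∑ m, primIdem A θ j (Astar (primIdem A θ m (v i))) := by
        conv_lhs => rw [hsumF]
        rw [map_sum, map_sum]
      rw [hexp, Finset.sum_eq_single i (fun m _ hmi => ?_) (by simp)]
      · exact primIdem_step hdim hθ hminA Astar
          ((htriE j i).2 (int_abs_one _ _ (Or.inr hij))) ⟨v i, rfl⟩ hFvi
      · rcases lt_or_ge ((m : ℕ)) ((i : ℕ)) with hm | hm
        · rw [hFvi0 i m hm, map_zero, map_zero]
        · have hmne : (m : ℕ) ≠ (i : ℕ) := fun h => hmi (Fin.ext h)
          have hz := (htriE j m).1 (int_abs_gt _ _ (Or.inr (by omega)))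
          have hrw : primIdem A θ j (Astar (primIdem A θ m (v i))) =
              (primIdem A θ j * Astar * primIdem A θ m) (v i) := rfl
          rw [hrw, hz, LinearMap.zero_apply]
    have hφ0 : φ0 ≠ 0 := by
      intro h0
      apply hFjw
      rw [hw', h0, zero_smul, map_zero]
    refine ⟨φ0, hφ0, fun j₂ hj₂ => ?_⟩
    have hj2 : j₂ = j := Fin.ext (by omega)
    rw [hj2, ← hw']
    abel
  refine ⟨⟨hLI, hspan⟩, ⟨hpart2a, hpart2b⟩, ?_⟩
  refine ⟨fun i => if h : 0 < (i : ℕ) then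
      (hstep i ⟨(i : ℕ) - 1, Nat.lt_of_le_of_lt (Nat.sub_le _ _) i.isLt⟩
        (Nat.succ_pred_eq_of_pos h)).choose else 1, hAsu, ?_⟩
  intro i j hij
  have hipos : 0 < (i : ℕ) := by omega
  simp only [dif_pos hipos]
  obtain ⟨hne, heq⟩ := (hstep i ⟨(i : ℕ) - 1,
    Nat.lt_of_le_of_lt (Nat.sub_le _ _) i.isLt⟩
      (Nat.succ_pred_eq_of_pos hipos)).choose_spec
  exact ⟨hne, heq j hij⟩
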